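/- Let R be a ring with identity that is left and right Artinian and is a Duo ring (every left ideal and every right ideal of R is a two-sided ideal). Then A^l(IPO(R)) = A^r(IPO(R)) = IPO(R) \ {0, R}. Consequently, APOG(R) is connected and every pair of distinct vertices of APOG(R) is joined by a directed path of length at most 3. -/

import Mathlib

open scoped Pointwise

/-- `I` is a left ideal of the ring `R`: an additive subgroup with `R·I ⊆ I`. -/
def IsLeftIdeal (R : Type*) [Ring R] (I : AddSubgroup R) : Prop :=
  ∀ r : R, ∀ x ∈ I, r * x ∈ I

/-- `I` is a right ideal of the ring `R`: an additive subgroup with `I·R ⊆ I`. -/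
def IsRightIdeal (R : Type*) [Ring R] (I : AddSubgroup R) : Prop :=
  ∀ r : R, ∀ x ∈ I, x * r ∈ I

/-- `I` is a one-sided (left or right) ideal of `R`. -/
def IsOneSidedIdeal (R : Type*) [Ring R] (I : AddSubgroup R) : Prop :=
  IsLeftIdeal R I ∨ IsRightIdeal R I

/-- `IPO(R)`: the set of all products `I*J` of two one-sided ideals of `R`.
Here `I * J` is the additive subgroup generated by `{a*b : a ∈ I, b ∈ J}`
(the pointwise product of additive subgroups). -/
def IPO (R : Type*) [Ring R] : Set (AddSubgroup R) :=
  {A | ∃ I J : AddSubgroup R, IsOneSidedIdeal R I ∧ IsOneSidedIdeal R J ∧ A = I * J}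

/-- `A` is a vertex of `APOG(R) = Γ(IPO(R))`: a nonzero element of `IPO(R)` that is a
one-sided zero-divisor of the semigroup `IPO(R)`. -/
def APOGVertex (R : Type*) [Ring R] (A : AddSubgroup R) : Prop :=
  A ∈ IPO R ∧ A ≠ ⊥ ∧ ∃ B ∈ IPO R, B ≠ ⊥ ∧ (A * B = ⊥ ∨ B * A = ⊥)

/-- The directed edge `A → B` of `APOG(R)`: both are vertices, `A ≠ B` and `A*B = 0`. -/
def APOGEdge (R : Type*) [Ring R] (A B : AddSubgroup R) : Prop :=
  APOGVertex R A ∧ APOGVertex R B ∧ A ≠ B ∧ A * B = ⊥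

/-- `APOG(R)` is connected: for any two distinct vertices there is a directed path from
the first to the second through vertices. -/
def APOGConnected (R : Type*) [Ring R] : Prop :=
  ∀ A B : AddSubgroup R, APOGVertex R A → APOGVertex R B → A ≠ B →
    Relation.TransGen (APOGEdge R) A B

/-- There is a directed path of length at most `3` from `A` to `B` in `APOG(R)`. -/
def APOGPathLe3 (R : Type*) [Ring R] (A B : AddSubgroup R) : Prop :=
  APOGEdge R A B ∨ (∃ C, APOGEdge R A C ∧ APOGEdge R C B) ∨
    ∃ C D, APOGEdge R A C ∧ APOGEdge R C D ∧ APOGEdge R D B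

/-- `A^l(IPO(R))`. -/
def AleftIPO (R : Type*) [Ring R] : Set (AddSubgroup R) :=
  {A | APOGVertex R A ∧ ∃ B, APOGVertex R B ∧ B * A = ⊥}

/-- `A^r(IPO(R))`. -/
def ArightIPO (R : Type*) [Ring R] : Set (AddSubgroup R) :=
  {A | APOGVertex R A ∧ ∃ B, APOGVertex R B ∧ A * B = ⊥}

/-- A family `T` of additive subgroups satisfies the descending chain condition. -/
def DCCOn (R : Type*) [Ring R] (T : Set (AddSubgroup R)) : Prop :=
  ∀ f : ℕ → AddSubgroup R, (∀ n, f n ∈ T) → (∀ n, f (n + 1) ≤ f n) →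
    ∃ N, ∀ n, N ≤ n → f n = f N


/-!
In a duo ring the members of `IPO(R)` are exactly the two-sided ideals, and idempotents are
central. The heart of the matter is that a proper ideal `A` of a left and right Artinian duo ring
has nonzero left and right annihilators. Take `A` minimal without this property. If `A * A < A`,
an element `z ≠ 0` killing `A * A` yields one killing `A`: `z` itself or some `x * z`, `x ∈ A`.
If `A * A = A`, Fitting's lemma (`eⁿR` and `Reⁿ` stabilize) puts a nonzero idempotent into every
nonzero idempotent ideal, and exhausting `A` by such idempotents gives a central idempotent `g`
with `A = gR`; then `1 - g ≠ 0` annihilates `A` on both sides.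

So the vertices of `APOG(R)` are the ideals other than `0` and `R`, and the right annihilator
of `A` and the left annihilator of `B` (or their intersection, when it is nonzero) give a path
`A → r.ann A → l.ann B → B` of length at most `3`.
-/

namespace AddSubgroup

variable {R : Type*} [Ring R]

protected lemma mul_mem_mul {M N : AddSubgroup R} {a b : R} (ha : a ∈ M) (hb : b ∈ N) :
    a * b ∈ M * N :=
  AddSubmonoid.mul_mem_mul ha hb

protected lemma mul_le {M N P : AddSubgroup R} : M * N ≤ P ↔ ∀ m ∈ M, ∀ n ∈ N, m * n ∈ P :=
  AddSubmonoid.mul_le (M := M.toAddSubmonoid) (N := N.toAddSubmonoid) (P := P.toAddSubmonoid)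

@[elab_as_elim]
protected lemma mul_induction_on {M N : AddSubgroup R} {C : R → Prop} {r : R} (hr : r ∈ M * N)
    (hm : ∀ m ∈ M, ∀ n ∈ N, C (m * n)) (ha : ∀ x y, C x → C y → C (x + y)) : C r :=
  AddSubmonoid.mul_induction_on hr hm ha

protected lemma mul_le_mul_right {M N P : AddSubgroup R} (h : N ≤ P) : M * N ≤ M * P :=
  AddSubgroup.mul_le.2 fun _ hm _ hn => AddSubgroup.mul_mem_mul hm (h hn)

protected lemma mul_le_mul_left {M N P : AddSubgroup R} (h : M ≤ N) : M * P ≤ N * P :=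
  AddSubgroup.mul_le.2 fun _ hm _ hp => AddSubgroup.mul_mem_mul (h hm) hp

lemma mul_eq_bot_iff {M N : AddSubgroup R} : M * N = ⊥ ↔ ∀ m ∈ M, ∀ n ∈ N, m * n = 0 := by
  simp only [eq_bot_iff, AddSubgroup.mul_le, mem_bot]

lemma ne_bot_of_mem {H : AddSubgroup R} {x : R} (hx : x ∈ H) (h0 : x ≠ 0) : H ≠ ⊥ :=
  fun h => h0 ((eq_bot_iff_forall H).1 h x hx)

def rightAnnihilator (A : AddSubgroup R) : AddSubgroup R where
  carrier := {x | ∀ a ∈ A, a * x = 0}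
  zero_mem' := fun a _ => mul_zero a
  add_mem' := fun hx hy a ha => by rw [mul_add, hx a ha, hy a ha, add_zero]
  neg_mem' := fun hx a ha => by rw [mul_neg, hx a ha, neg_zero]

def leftAnnihilator (A : AddSubgroup R) : AddSubgroup R where
  carrier := {x | ∀ a ∈ A, x * a = 0}
  zero_mem' := fun a _ => zero_mul a
  add_mem' := fun hx hy a ha => by rw [add_mul, hx a ha, hy a ha, add_zero]
  neg_mem' := fun hx a ha => by rw [neg_mul, hx a ha, neg_zero]

def annihilatedBy (B : AddSubgroup R) (g : R) : AddSubgroup R :=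
  B ⊓ (AddMonoidHom.mulLeft g).ker

lemma mem_annihilatedBy {B : AddSubgroup R} {g b : R} :
    b ∈ B.annihilatedBy g ↔ b ∈ B ∧ g * b = 0 :=
  Iff.rfl

variable {A : AddSubgroup R}

lemma mul_rightAnnihilator (A : AddSubgroup R) : A * A.rightAnnihilator = ⊥ :=
  mul_eq_bot_iff.2 fun a ha _ hx => hx a ha

lemma leftAnnihilator_mul (A : AddSubgroup R) : A.leftAnnihilator * A = ⊥ :=
  mul_eq_bot_iff.2 fun _ hx a ha => hx a ha

lemma rightAnnihilator_ne_top (hA : A ≠ ⊥) : A.rightAnnihilator ≠ ⊤ := fun h =>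
  hA <| (eq_bot_iff_forall A).2 fun a ha => by
    simpa using (h ▸ mem_top (1 : R) : (1 : R) ∈ A.rightAnnihilator) a ha

lemma leftAnnihilator_ne_top (hA : A ≠ ⊥) : A.leftAnnihilator ≠ ⊤ := fun h =>
  hA <| (eq_bot_iff_forall A).2 fun a ha => by
    simpa using (h ▸ mem_top (1 : R) : (1 : R) ∈ A.leftAnnihilator) a ha

lemma rightAnnihilator_ne_bot_of_mul_self (h : (A * A).rightAnnihilator ≠ ⊥) :
    A.rightAnnihilator ≠ ⊥ := by
  intro hA
  rw [eq_bot_iff_forall] at hA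
  refine h ((eq_bot_iff_forall _).2 fun z hz => hA z fun x hx => hA (x * z) fun a ha => ?_)
  rw [← mul_assoc]
  exact hz _ (AddSubgroup.mul_mem_mul ha hx)

lemma leftAnnihilator_ne_bot_of_mul_self (h : (A * A).leftAnnihilator ≠ ⊥) :
    A.leftAnnihilator ≠ ⊥ := by
  intro hA
  rw [eq_bot_iff_forall] at hA
  refine h ((eq_bot_iff_forall _).2 fun z hz => hA z fun x hx => hA (z * x) fun a ha => ?_)
  rw [mul_assoc]
  exact hz _ (AddSubgroup.mul_mem_mul hx ha)

end AddSubgroup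

open AddSubgroup

section

variable {R : Type*} [Ring R]

def IsTwoSidedIdeal (R : Type*) [Ring R] (I : AddSubgroup R) : Prop :=
  IsLeftIdeal R I ∧ IsRightIdeal R I

def IsDuoRing (R : Type*) [Ring R] : Prop :=
  ∀ I : AddSubgroup R, IsOneSidedIdeal R I → IsTwoSidedIdeal R I

lemma IsLeftIdeal.mul {A : AddSubgroup R} (hA : IsLeftIdeal R A) (B : AddSubgroup R) :
    IsLeftIdeal R (A * B) := fun r _ hx => by
  refine AddSubgroup.mul_induction_on hx (fun m hm n hn => ?_) fun x y hx hy => ?_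
  · rw [← mul_assoc]; exact AddSubgroup.mul_mem_mul (hA r m hm) hn
  · rw [mul_add]; exact add_mem hx hy

lemma IsRightIdeal.mul {B : AddSubgroup R} (hB : IsRightIdeal R B) (A : AddSubgroup R) :
    IsRightIdeal R (A * B) := fun r _ hx => by
  refine AddSubgroup.mul_induction_on hx (fun m hm n hn => ?_) fun x y hx hy => ?_
  · rw [mul_assoc]; exact AddSubgroup.mul_mem_mul hm (hB r n hn)
  · rw [add_mul]; exact add_mem hx hy

lemma IsLeftIdeal.mul_le {B : AddSubgroup R} (hB : IsLeftIdeal R B) (A : AddSubgroup R) :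
    A * B ≤ B :=
  AddSubgroup.mul_le.2 fun m _ n hn => hB m n hn

lemma IsRightIdeal.mul_le {A : AddSubgroup R} (hA : IsRightIdeal R A) (B : AddSubgroup R) :
    A * B ≤ A :=
  AddSubgroup.mul_le.2 fun m hm n _ => hA n m hm

lemma IsRightIdeal.mul_top {A : AddSubgroup R} (hA : IsRightIdeal R A) : A * ⊤ = A :=
  le_antisymm (hA.mul_le ⊤) fun a ha => by
    simpa using AddSubgroup.mul_mem_mul ha (mem_top (1 : R))

lemma isTwoSidedIdeal_top : IsTwoSidedIdeal R ⊤ :=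
  ⟨fun _ _ _ => mem_top _, fun _ _ _ => mem_top _⟩

lemma IsTwoSidedIdeal.inf {A B : AddSubgroup R} (hA : IsTwoSidedIdeal R A)
    (hB : IsTwoSidedIdeal R B) : IsTwoSidedIdeal R (A ⊓ B) :=
  ⟨fun r _ hx => ⟨hA.1 r _ hx.1, hB.1 r _ hx.2⟩, fun r _ hx => ⟨hA.2 r _ hx.1, hB.2 r _ hx.2⟩⟩

lemma IsTwoSidedIdeal.mul {A B : AddSubgroup R} (hA : IsTwoSidedIdeal R A)
    (hB : IsTwoSidedIdeal R B) : IsTwoSidedIdeal R (A * B) :=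
  ⟨hA.1.mul B, hB.2.mul A⟩

lemma IsRightIdeal.rightAnnihilator {A : AddSubgroup R} (hA : IsRightIdeal R A) :
    IsTwoSidedIdeal R A.rightAnnihilator :=
  ⟨fun r x hx a ha => by rw [← mul_assoc]; exact hx _ (hA r a ha),
    fun r x hx a ha => by rw [← mul_assoc, hx a ha, zero_mul]⟩

lemma IsLeftIdeal.leftAnnihilator {A : AddSubgroup R} (hA : IsLeftIdeal R A) :
    IsTwoSidedIdeal R A.leftAnnihilator :=
  ⟨fun r x hx a ha => by rw [mul_assoc, hx a ha, mul_zero],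
    fun r x hx a ha => by rw [mul_assoc]; exact hx _ (hA r a ha)⟩

lemma IsLeftIdeal.eq_top_of_one_mem {A : AddSubgroup R} (hA : IsLeftIdeal R A)
    (h1 : (1 : R) ∈ A) : A = ⊤ :=
  eq_top_iff.2 fun r _ => by simpa using hA r 1 h1

lemma DCCOn.wellFoundedOn {T : Set (AddSubgroup R)} (hT : DCCOn R T) :
    T.WellFoundedOn (· < ·) := by
  rw [Set.wellFoundedOn_iff_no_descending_seq]
  intro f hf
  obtain ⟨N, hN⟩ := hT f hf fun n => (f.map_rel_iff.2 n.lt_succ_self).le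
  exact (f.map_rel_iff.2 N.lt_succ_self).ne (hN (N + 1) N.le_succ)

lemma DCCOn.exists_minimal {T S : Set (AddSubgroup R)} (hT : DCCOn R T) (hST : S ⊆ T)
    (hS : S.Nonempty) : ∃ J, Minimal (· ∈ S) J :=
  (hT.wellFoundedOn.subset hST).exists_minimal hS

namespace IsDuoRing

variable (hR : IsDuoRing R)
include hR

lemma exists_mul_eq_mul_left (a r : R) : ∃ r', r * a = a * r' := by
  have hright : IsRightIdeal R (AddMonoidHom.mulLeft a).range := by
    rintro r _ ⟨y, rfl⟩
    exact ⟨y * r, (mul_assoc a y r).symm⟩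
  exact (hR _ (Or.inr hright)).1 r a ⟨1, mul_one a⟩ |>.imp fun _ h => h.symm

lemma exists_mul_eq_mul_right (a r : R) : ∃ r', a * r = r' * a := by
  have hleft : IsLeftIdeal R (AddMonoidHom.mulRight a).range := by
    rintro r _ ⟨y, rfl⟩
    exact ⟨r * y, mul_assoc r y a⟩
  exact (hR _ (Or.inl hleft)).2 r a ⟨1, one_mul a⟩ |>.imp fun _ h => h.symm

lemma commute_of_isIdempotentElem {g : R} (hg : IsIdempotentElem g) (r : R) : Commute g r := by
  obtain ⟨y, hy⟩ := hR.exists_mul_eq_mul_left g r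
  obtain ⟨y', hy'⟩ := hR.exists_mul_eq_mul_right g r
  calc g * r = y' * g * g := by rw [mul_assoc, hg.eq, hy']
    _ = g * r * g := by rw [← hy']
    _ = g * (g * y) := by rw [mul_assoc, hy]
    _ = r * g := by rw [← mul_assoc, hg.eq, hy]

lemma mem_IPO_iff {A : AddSubgroup R} : A ∈ IPO R ↔ IsTwoSidedIdeal R A := by
  constructor
  · rintro ⟨I, J, hI, hJ, rfl⟩
    exact ⟨(hR I hI).1.mul J, (hR J hJ).2.mul I⟩
  · intro hA
    exact ⟨A, ⊤, Or.inl hA.1, Or.inl isTwoSidedIdeal_top.1, hA.2.mul_top.symm⟩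

lemma isTwoSidedIdeal_annihilatedBy {B : AddSubgroup R} (hB : IsTwoSidedIdeal R B) {g : R}
    (hg : IsIdempotentElem g) : IsTwoSidedIdeal R (B.annihilatedBy g) := by
  refine ⟨fun r b hb => ?_, fun r b hb => ?_⟩ <;> obtain ⟨hbB, hgb⟩ := mem_annihilatedBy.1 hb
  · refine mem_annihilatedBy.2 ⟨hB.1 r b hbB, ?_⟩
    rw [← mul_assoc, (hR.commute_of_isIdempotentElem hg r).eq, mul_assoc, hgb, mul_zero]
  · exact mem_annihilatedBy.2 ⟨hB.2 r b hbB, by rw [← mul_assoc, hgb, zero_mul]⟩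

/- `{b ∈ B | g * b = 0}` is the image of `B` under the central idempotent `1 - g`. -/
lemma annihilatedBy_mul_self {B : AddSubgroup R} (hB : IsTwoSidedIdeal R B) (hBB : B * B = B)
    {g : R} (hg : IsIdempotentElem g) :
    B.annihilatedBy g * B.annihilatedBy g = B.annihilatedBy g := by
  have hproj {b : R} (hb : b ∈ B) : (1 - g) * b ∈ B.annihilatedBy g := by
    refine mem_annihilatedBy.2 ⟨?_, by rw [← mul_assoc, mul_sub, mul_one, hg.eq, sub_self,
      zero_mul]⟩
    rw [sub_mul, one_mul]
    exact sub_mem hb (hB.1 g b hb)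
  refine le_antisymm ((hR.isTwoSidedIdeal_annihilatedBy hB hg).2.mul_le _) fun b hb => ?_
  obtain ⟨hbB, hgb⟩ := mem_annihilatedBy.1 hb
  rw [show b = (1 - g) * b by rw [sub_mul, one_mul, hgb, sub_zero]]
  refine AddSubgroup.mul_induction_on (hBB.symm ▸ hbB : b ∈ B * B)
    (fun u hu v hv => ?_) fun u v hu hv => ?_
  · have hsplit : (1 - g) * u * ((1 - g) * v) = (1 - g) * (u * v) := by
      calc (1 - g) * u * ((1 - g) * v) = (1 - g) * (u * (1 - g)) * v := by
            simp only [mul_assoc]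
        _ = (1 - g) * (u * v) := by
            rw [← (hR.commute_of_isIdempotentElem hg.one_sub u).eq, ← mul_assoc,
              hg.one_sub.eq, mul_assoc]
    rw [← hsplit]
    exact AddSubgroup.mul_mem_mul (hproj hu) (hproj hv)
  · rw [mul_add]
    exact add_mem hu hv

end IsDuoRing

lemma IsIdempotentElem.mul_of_eq {M : Type*} [Semigroup M] {p s t : M} (hs : p = p * p * s)
    (ht : p = t * (p * p)) : IsIdempotentElem (p * s) := by
  have hps : p * s = t * p := by
    calc p * s = t * (p * p) * s := by conv_lhs => rw [ht]
      _ = t * (p * p * s) := by simp only [mul_assoc]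
      _ = t * p := by rw [← hs]
  calc p * s * (p * s) = t * p * (p * s) := congrArg (· * (p * s)) hps
    _ = t * (p * p * s) := by simp only [mul_assoc]
    _ = p * s := by rw [← hs, hps]

section Artinian

variable (hl : DCCOn R {I | IsLeftIdeal R I}) (hr : DCCOn R {I | IsRightIdeal R I})
include hl hr

/- Fitting: once `eⁿR` and `Reⁿ` are stable, `p = eᵐ⁺¹` lies in `p²R ∩ Rp²`. -/
lemma exists_isIdempotentElem_mul_ne_zero {e : R} (he : ¬IsNilpotent e) :
    ∃ s, IsIdempotentElem (e * s) ∧ e * s ≠ 0 := by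
  obtain ⟨N₁, hN₁⟩ := hr (fun n => (AddMonoidHom.mulLeft (e ^ n)).range)
    (fun n => by rintro r _ ⟨y, rfl⟩; exact ⟨y * r, (mul_assoc _ y r).symm⟩)
    (fun n => by rintro _ ⟨y, rfl⟩; exact ⟨e * y, by simp [pow_succ, mul_assoc]⟩)
  obtain ⟨N₂, hN₂⟩ := hl (fun n => (AddMonoidHom.mulRight (e ^ n)).range)
    (fun n => by rintro r _ ⟨y, rfl⟩; exact ⟨r * y, mul_assoc r y _⟩)
    (fun n => by rintro _ ⟨y, rfl⟩; exact ⟨y * e, by simp [pow_succ', mul_assoc]⟩)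
  set m := N₁ + N₂
  set p := e ^ (m + 1)
  have hpp : e ^ (2 * (m + 1)) = p * p := by rw [two_mul, pow_add]
  obtain ⟨s, hs⟩ : p ∈ (AddMonoidHom.mulLeft (p * p)).range := by
    rw [← hpp, hN₁ _ (by omega), ← hN₁ (m + 1) (by omega)]
    exact ⟨1, mul_one p⟩
  obtain ⟨t, ht⟩ : p ∈ (AddMonoidHom.mulRight (p * p)).range := by
    rw [← hpp, hN₂ _ (by omega), ← hN₂ (m + 1) (by omega)]
    exact ⟨1, one_mul p⟩
  simp only [AddMonoidHom.coe_mulLeft, AddMonoidHom.coe_mulRight] at hs ht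
  refine ⟨e ^ m * s, ?_, fun h0 => he ⟨m + 1, ?_⟩⟩
  · rw [← mul_assoc, ← pow_succ']
    exact IsIdempotentElem.mul_of_eq hs.symm ht.symm
  · rw [← mul_assoc, ← pow_succ'] at h0
    show p = 0
    rw [← hs, mul_assoc, show p * s = 0 from h0, mul_zero]

/- For a minimal left ideal `J ≠ 0` with `B * J = J`, some `Ba` with `a ∈ J` is again such an
ideal, so `Ba = J ∋ a`; then `a = e * a` with `e ∈ B`, and `e` is not nilpotent. -/
lemma exists_isIdempotentElem_mem_ne_zero {B : AddSubgroup R} (hB : IsTwoSidedIdeal R B)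
    (hBB : B * B = B) (hB0 : B ≠ ⊥) : ∃ g ∈ B, IsIdempotentElem g ∧ g ≠ 0 := by
  obtain ⟨J, ⟨hJl, hJ0, hBJ⟩, hJmin⟩ := hl.exists_minimal
    (S := {J | IsLeftIdeal R J ∧ J ≠ ⊥ ∧ B * J = J}) (fun J hJ => hJ.1) ⟨B, hB.1, hB0, hBB⟩
  obtain ⟨a, haJ, x, hxB, hxa⟩ : ∃ a ∈ J, ∃ x ∈ B, x * a ≠ 0 := by
    by_contra! h
    exact hJ0 (hBJ ▸ mul_eq_bot_iff.2 fun x hx a ha => h a ha x hx)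
  set Ba := B.map (AddMonoidHom.mulRight a)
  have hBa : IsLeftIdeal R Ba ∧ Ba ≠ ⊥ ∧ B * Ba = Ba := by
    refine ⟨?_, ne_bot_of_mem (mem_map_of_mem _ hxB) hxa, le_antisymm ?_ ?_⟩
    · rintro r _ ⟨y, hy, rfl⟩
      exact ⟨r * y, hB.1 r y hy, mul_assoc r y a⟩
    · refine AddSubgroup.mul_le.2 ?_
      rintro y hy _ ⟨z, hz, rfl⟩
      exact ⟨y * z, hB.2 z y hy, mul_assoc y z a⟩
    · rintro _ ⟨y, hy, rfl⟩
      rw [← hBB] at hy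
      refine AddSubgroup.mul_induction_on hy (fun u hu v hv => ?_) fun u v hu hv => ?_
      · show u * v * a ∈ B * Ba
        rw [mul_assoc]
        exact AddSubgroup.mul_mem_mul hu (mem_map_of_mem _ hv)
      · rw [map_add]
        exact add_mem hu hv
  obtain ⟨e, heB, hea⟩ := mem_map.1 (hJmin hBa (by rintro _ ⟨y, -, rfl⟩; exact hJl y a haJ) haJ)
  have hea : e * a = a := hea
  have hpow (n : ℕ) : e ^ n * a = a := by
    induction n with
    | zero => rw [pow_zero, one_mul]
    | succ k ih => rw [pow_succ, mul_assoc, hea, ih]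
  have he : ¬IsNilpotent e := fun ⟨n, hn⟩ => hxa (by rw [← hpow n, hn, zero_mul, mul_zero])
  obtain ⟨s, hs, hs0⟩ := exists_isIdempotentElem_mul_ne_zero hl hr he
  exact ⟨e * s, hB.2 s e heB, hs, hs0⟩

end Artinian

lemma not_apogVertex_top : ¬APOGVertex R ⊤ := by
  rintro ⟨-, -, B, -, hB, hB0 | hB0⟩
  · exact hB ((eq_bot_iff_forall B).2 fun b hb => by
      simpa using mul_eq_bot_iff.1 hB0 1 (mem_top 1) b hb)
  · exact hB ((eq_bot_iff_forall B).2 fun b hb => by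
      simpa using mul_eq_bot_iff.1 hB0 b hb 1 (mem_top 1))

lemma reflGen_apogEdge_of_mul_eq_bot {A B : AddSubgroup R} (hA : APOGVertex R A)
    (hB : APOGVertex R B) (hAB : A * B = ⊥) : Relation.ReflGen (APOGEdge R) A B := by
  by_cases h : A = B
  · exact h ▸ .refl
  · exact .single ⟨hA, hB, h, hAB⟩

lemma apogPathLe3_of_reflGen {A B C D : AddSubgroup R} (hAB : A ≠ B)
    (hAC : Relation.ReflGen (APOGEdge R) A C) (hCD : Relation.ReflGen (APOGEdge R) C D)
    (hDB : Relation.ReflGen (APOGEdge R) D B) : APOGPathLe3 R A B := by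
  rcases hAC with _ | hAC <;> rcases hCD with _ | hCD <;> rcases hDB with _ | hDB
  all_goals first
    | exact absurd rfl hAB
    | exact Or.inl ‹_›
    | exact Or.inr (Or.inl ⟨_, ‹_›, ‹_›⟩)
    | exact Or.inr (Or.inr ⟨_, _, hAC, hCD, hDB⟩)

lemma APOGPathLe3.transGen {A B : AddSubgroup R} (h : APOGPathLe3 R A B) :
    Relation.TransGen (APOGEdge R) A B := by
  rcases h with h | ⟨C, h₁, h₂⟩ | ⟨C, D, h₁, h₂, h₃⟩
  · exact .single h
  · exact .tail (.single h₁) h₂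
  · exact .tail (.tail (.single h₁) h₂) h₃

section ArtinianDuo

variable (hR : IsDuoRing R) (hl : DCCOn R {I | IsLeftIdeal R I})
  (hr : DCCOn R {I | IsRightIdeal R I})
include hR hl hr

/- Minimize `{b ∈ B | g * b = 0}` over idempotents `g ∈ B`: if the minimum were nonzero, it
would be an idempotent ideal, and a nonzero idempotent `h` in it would give the idempotent
`g + h ∈ B` with a smaller such set. -/
lemma exists_isIdempotentElem_forall_mul_eq {B : AddSubgroup R} (hB : IsTwoSidedIdeal R B)
    (hBB : B * B = B) : ∃ g ∈ B, IsIdempotentElem g ∧ ∀ b ∈ B, g * b = b := by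
  obtain ⟨_, ⟨g, hgB, hg, rfl⟩, hmin⟩ := hl.exists_minimal
    (S := {S | ∃ g ∈ B, IsIdempotentElem g ∧ S = B.annihilatedBy g})
    (by rintro _ ⟨g, -, hg, rfl⟩; exact (hR.isTwoSidedIdeal_annihilatedBy hB hg).1)
    ⟨_, 0, B.zero_mem, .zero, rfl⟩
  have hK : B.annihilatedBy g = ⊥ := by
    by_contra hK0
    obtain ⟨h, hhK, hh, hh0⟩ := exists_isIdempotentElem_mem_ne_zero hl hr
      (hR.isTwoSidedIdeal_annihilatedBy hB hg) (hR.annihilatedBy_mul_self hB hBB hg) hK0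
    obtain ⟨hhB, hgh⟩ := mem_annihilatedBy.1 hhK
    have hhg : h * g = 0 := by rw [← (hR.commute_of_isIdempotentElem hg h).eq, hgh]
    have hle : B.annihilatedBy (g + h) ≤ B.annihilatedBy g := fun b hb => by
      obtain ⟨hbB, hghb⟩ := mem_annihilatedBy.1 hb
      refine mem_annihilatedBy.2 ⟨hbB, ?_⟩
      calc g * b = g * (g + h) * b := by rw [mul_add, hg.eq, hgh, add_zero]
        _ = 0 := by rw [mul_assoc, hghb, mul_zero]
    have hh_mem : h ∈ B.annihilatedBy (g + h) :=
      hmin ⟨g + h, add_mem hgB hhB, hg.add hh (by rw [hgh, hhg, add_zero]), rfl⟩ hle hhK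
    exact hh0 (by simpa [add_mul, hgh, hh.eq] using (mem_annihilatedBy.1 hh_mem).2)
  refine ⟨g, hgB, hg, fun b hb => ?_⟩
  have h0 := (eq_bot_iff_forall _).1 hK _ (mem_annihilatedBy.2 ⟨sub_mem hb (hB.1 g b hb), by
    rw [mul_sub, ← mul_assoc, hg.eq, sub_self]⟩)
  exact (sub_eq_zero.1 h0).symm

theorem IsTwoSidedIdeal.annihilators_ne_bot {A : AddSubgroup R} (hA : IsTwoSidedIdeal R A)
    (htop : A ≠ ⊤) : A.rightAnnihilator ≠ ⊥ ∧ A.leftAnnihilator ≠ ⊥ := by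
  by_contra hbad
  obtain ⟨A₀, hmin⟩ := hl.exists_minimal
    (S := {A | IsTwoSidedIdeal R A ∧ A ≠ ⊤ ∧
      ¬(A.rightAnnihilator ≠ ⊥ ∧ A.leftAnnihilator ≠ ⊥)}) (fun A hA => hA.1.1) ⟨A, hA, htop, hbad⟩
  obtain ⟨hA₀, htop₀, hbad₀⟩ := hmin.prop
  apply hbad₀
  rcases (hA₀.2.mul_le A₀).lt_or_eq with hlt | hAA
  · obtain ⟨hr₂, hl₂⟩ : (A₀ * A₀).rightAnnihilator ≠ ⊥ ∧ (A₀ * A₀).leftAnnihilator ≠ ⊥ := by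
      by_contra h
      exact hmin.not_prop_of_lt hlt ⟨hA₀.mul hA₀, ne_top_of_le_ne_top htop₀ hlt.le, h⟩
    exact ⟨rightAnnihilator_ne_bot_of_mul_self hr₂, leftAnnihilator_ne_bot_of_mul_self hl₂⟩
  · obtain ⟨g, hgA, hg, hgb⟩ := exists_isIdempotentElem_forall_mul_eq hR hl hr hA₀ hAA
    have h1g : (1 : R) - g ≠ 0 := fun h => htop₀ (hA₀.1.eq_top_of_one_mem (sub_eq_zero.1 h ▸ hgA))
    refine ⟨ne_bot_of_mem (fun a ha => ?_) h1g, ne_bot_of_mem (fun a ha => ?_) h1g⟩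
    · rw [mul_sub, mul_one, ← (hR.commute_of_isIdempotentElem hg a).eq, hgb a ha, sub_self]
    · rw [sub_mul, one_mul, hgb a ha, sub_self]


lemma apogVertex_iff {A : AddSubgroup R} :
    APOGVertex R A ↔ IsTwoSidedIdeal R A ∧ A ≠ ⊥ ∧ A ≠ ⊤ := by
  refine ⟨fun hA => ⟨hR.mem_IPO_iff.1 hA.1, hA.2.1, fun h => not_apogVertex_top (h ▸ hA)⟩,
    fun ⟨hA, hA0, htop⟩ => ⟨hR.mem_IPO_iff.2 hA, hA0, ?_⟩⟩
  exact ⟨_, hR.mem_IPO_iff.2 hA.2.rightAnnihilator, (hA.annihilators_ne_bot hR hl hr htop).1,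
    .inl A.mul_rightAnnihilator⟩

lemma APOGVertex.rightAnnihilator {A : AddSubgroup R} (hA : APOGVertex R A) :
    APOGVertex R A.rightAnnihilator := by
  obtain ⟨hA, hA0, htop⟩ := (apogVertex_iff hR hl hr).1 hA
  exact (apogVertex_iff hR hl hr).2 ⟨hA.2.rightAnnihilator,
    (hA.annihilators_ne_bot hR hl hr htop).1, rightAnnihilator_ne_top hA0⟩

lemma APOGVertex.leftAnnihilator {A : AddSubgroup R} (hA : APOGVertex R A) :
    APOGVertex R A.leftAnnihilator := by
  obtain ⟨hA, hA0, htop⟩ := (apogVertex_iff hR hl hr).1 hA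
  exact (apogVertex_iff hR hl hr).2 ⟨hA.1.leftAnnihilator,
    (hA.annihilators_ne_bot hR hl hr htop).2, leftAnnihilator_ne_top hA0⟩

lemma apogVertex_iff_mem_IPO_diff {A : AddSubgroup R} :
    APOGVertex R A ↔ A ∈ IPO R \ {⊥, ⊤} := by
  simp only [apogVertex_iff hR hl hr, hR.mem_IPO_iff, Set.mem_sdiff, Set.mem_insert_iff,
    Set.mem_singleton_iff, not_or]

lemma AleftIPO_eq : AleftIPO R = IPO R \ {⊥, ⊤} := Set.ext fun A =>
  ⟨fun h => (apogVertex_iff_mem_IPO_diff hR hl hr).1 h.1, fun h =>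
    have hA := (apogVertex_iff_mem_IPO_diff hR hl hr).2 h
    ⟨hA, _, hA.leftAnnihilator hR hl hr, A.leftAnnihilator_mul⟩⟩

lemma ArightIPO_eq : ArightIPO R = IPO R \ {⊥, ⊤} := Set.ext fun A =>
  ⟨fun h => (apogVertex_iff_mem_IPO_diff hR hl hr).1 h.1, fun h =>
    have hA := (apogVertex_iff_mem_IPO_diff hR hl hr).2 h
    ⟨hA, _, hA.rightAnnihilator hR hl hr, A.mul_rightAnnihilator⟩⟩

theorem apogPathLe3 {A B : AddSubgroup R} (hA : APOGVertex R A) (hB : APOGVertex R B)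
    (hAB : A ≠ B) : APOGPathLe3 R A B := by
  have hX := hA.rightAnnihilator hR hl hr
  have hY := hB.leftAnnihilator hR hl hr
  have hXi := ((apogVertex_iff hR hl hr).1 hX).1
  have hYi := ((apogVertex_iff hR hl hr).1 hY).1
  by_cases hXY : A.rightAnnihilator ⊓ B.leftAnnihilator = ⊥
  · have hXY' : A.rightAnnihilator * B.leftAnnihilator = ⊥ :=
      eq_bot_iff.2 (hXY ▸ le_inf (hXi.2.mul_le _) (hYi.1.mul_le _))
    exact apogPathLe3_of_reflGen hAB (reflGen_apogEdge_of_mul_eq_bot hA hX A.mul_rightAnnihilator)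
      (reflGen_apogEdge_of_mul_eq_bot hX hY hXY')
      (reflGen_apogEdge_of_mul_eq_bot hY hB B.leftAnnihilator_mul)
  · have hC : APOGVertex R (A.rightAnnihilator ⊓ B.leftAnnihilator) :=
      (apogVertex_iff hR hl hr).2 ⟨hXi.inf hYi, hXY,
        ne_top_of_le_ne_top (rightAnnihilator_ne_top hA.2.1) inf_le_left⟩
    have hAC : A * (A.rightAnnihilator ⊓ B.leftAnnihilator) = ⊥ :=
      eq_bot_iff.2 (A.mul_rightAnnihilator ▸ AddSubgroup.mul_le_mul_right inf_le_left)
    have hCB : (A.rightAnnihilator ⊓ B.leftAnnihilator) * B = ⊥ :=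
      eq_bot_iff.2 (B.leftAnnihilator_mul ▸ AddSubgroup.mul_le_mul_left inf_le_right)
    exact apogPathLe3_of_reflGen hAB (reflGen_apogEdge_of_mul_eq_bot hA hC hAC) .refl
      (reflGen_apogEdge_of_mul_eq_bot hC hB hCB)

end ArtinianDuo

end

/-- If `R` is a left and right Artinian Duo ring, then
`A^l(IPO(R)) = A^r(IPO(R)) = IPO(R) \ {0, R}`; consequently `APOG(R)` is connected and
any two distinct vertices are joined by a directed path of length at most `3`. -/
theorem APOG_of_artinian_duo (R : Type*) [Ring R]
    (hartl : DCCOn R {I | IsLeftIdeal R I}) (hartr : DCCOn R {I | IsRightIdeal R I})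
    (hduo : ∀ I : AddSubgroup R, IsOneSidedIdeal R I → IsLeftIdeal R I ∧ IsRightIdeal R I) :
    AleftIPO R = ArightIPO R ∧
    ArightIPO R = IPO R \ {(⊥ : AddSubgroup R), (⊤ : AddSubgroup R)} ∧
    APOGConnected R ∧
    (∀ A B : AddSubgroup R, APOGVertex R A → APOGVertex R B → A ≠ B →
      APOGPathLe3 R A B) := by
  have hright := ArightIPO_eq hduo hartl hartr
  have hpath {A B : AddSubgroup R} (hA : APOGVertex R A) (hB : APOGVertex R B) (hAB : A ≠ B) :
      APOGPathLe3 R A B :=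
    apogPathLe3 hduo hartl hartr hA hB hAB
  exact ⟨(AleftIPO_eq hduo hartl hartr).trans hright.symm, hright,
    fun _ _ hA hB hAB => (hpath hA hB hAB).transGen, fun _ _ => hpath⟩
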